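/- arXiv:1307.7516 — 3 statements merged into one kernel-verified Lean document; each statement's English description precedes it below -/
import Mathlib

section
/- The map F = (J,H) : TS² → ℝ² of the spherical pendulum, where J(q,p) = q₁p₂ − q₂p₁ and H(q,p) = (p₁²+p₂²+p₃²)/2 + q₃, is a proper map. -/
open Set

noncomputable section

/-- The tangent bundle of the unit sphere, realized as a subset of `ℝ³ × ℝ³`. -/
def TS2 : Set (EuclideanSpace ℝ (Fin 3) × EuclideanSpace ℝ (Fin 3)) :=
  {qp | ‖qp.1‖ = 1 ∧ (inner ℝ qp.1 qp.2 : ℝ) = 0}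

/-- The momentum map of the spherical pendulum, `J(q,p) = q₁p₂ − q₂p₁`. -/
def Jpend (qp : EuclideanSpace ℝ (Fin 3) × EuclideanSpace ℝ (Fin 3)) : ℝ :=
  qp.1 0 * qp.2 1 - qp.1 1 * qp.2 0

/-- The Hamiltonian of the spherical pendulum, `H(q,p) = ‖p‖²/2 + q₃`. -/
def Hpend (qp : EuclideanSpace ℝ (Fin 3) × EuclideanSpace ℝ (Fin 3)) : ℝ :=
  (qp.2 0 ^ 2 + qp.2 1 ^ 2 + qp.2 2 ^ 2) / 2 + qp.1 2

/- On the closed set `TS²` the position is a unit vector and `H = ‖p‖²/2 + q₃ ≥ ‖p‖²/2 - 1`,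
so a bound on `H` bounds `(q, p)`. Thus preimages of compact sets are closed and bounded in
`ℝ⁶`, hence compact. -/

theorem IsClosed.isProperMap_domRestrict_of_isBounded {X Y : Type*} [PseudoMetricSpace X]
    [ProperSpace X] [TopologicalSpace Y] [T2Space Y] [CompactlyCoherentSpace Y]
    {s : Set X} {f : X → Y} (hs : IsClosed s) (hf : Continuous f)
    (hbdd : ∀ K, IsCompact K → Bornology.IsBounded (s ∩ f ⁻¹' K)) :
    IsProperMap (s.domRestrict f) := by
  refine isProperMap_iff_isCompact_preimage.2 ⟨hf.comp continuous_subtype_val, fun K hK => ?_⟩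
  have hcompact : IsCompact (s ∩ f ⁻¹' K) :=
    Metric.isCompact_of_isClosed_isBounded (hs.inter (hK.isClosed.preimage hf)) (hbdd K hK)
  have hpre : s.domRestrict f ⁻¹' K = Subtype.val ⁻¹' (s ∩ f ⁻¹' K) := by
    ext x
    simp [domRestrict_apply]
  rw [hpre]
  exact hs.isClosedEmbedding_subtypeVal.isCompact_preimage hcompact

theorem isClosed_TS2 : IsClosed TS2 :=
  (isClosed_eq (continuous_norm.comp continuous_fst) continuous_const).inter
    (isClosed_eq continuous_inner continuous_const)

theorem continuous_Jpend : Continuous Jpend := by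
  unfold Jpend
  fun_prop

theorem continuous_Hpend : Continuous Hpend := by
  unfold Hpend
  fun_prop

theorem Hpend_eq (qp : EuclideanSpace ℝ (Fin 3) × EuclideanSpace ℝ (Fin 3)) :
    Hpend qp = ‖qp.2‖ ^ 2 / 2 + qp.1 2 := by
  simp [Hpend, EuclideanSpace.norm_sq_eq, Fin.sum_univ_three]

theorem sq_norm_snd_le_of_mem_TS2 {qp : EuclideanSpace ℝ (Fin 3) × EuclideanSpace ℝ (Fin 3)}
    (h : qp ∈ TS2) : ‖qp.2‖ ^ 2 ≤ 2 * (Hpend qp + 1) := by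
  have hq : -1 ≤ qp.1 2 := (abs_le.1 ((PiLp.norm_apply_le qp.1 2).trans h.1.le)).1
  rw [Hpend_eq]
  linarith

theorem isBounded_TS2_inter_Hpend_le (r : ℝ) :
    Bornology.IsBounded (TS2 ∩ {qp | Hpend qp ≤ r}) := by
  refine isBounded_iff_forall_norm_le.2 ⟨max 1 (2 * (r + 1) + 1), fun qp ⟨hTS2, hH⟩ => ?_⟩
  have hp : ‖qp.2‖ ≤ 2 * (r + 1) + 1 := by -- from `‖p‖ ≤ ‖p‖² + 1`
    nlinarith [sq_norm_snd_le_of_mem_TS2 hTS2, sq_nonneg (‖qp.2‖ - 1), hH.out]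
  exact max_le (hTS2.1.le.trans (le_max_left _ _)) (hp.trans (le_max_right _ _))

/-- The map `F = (J,H) : TS² → ℝ²` of the spherical pendulum is proper. -/
theorem pendulum_F_proper :
    IsProperMap (TS2.restrict fun qp => (Jpend qp, Hpend qp)) := by
  refine isClosed_TS2.isProperMap_domRestrict_of_isBounded
    (continuous_Jpend.prodMk continuous_Hpend) fun K hK => ?_
  obtain ⟨r, hr⟩ := hK.isBounded.subset_closedBall 0
  refine (isBounded_TS2_inter_Hpend_le r).subset (inter_subset_inter_right _ fun qp hqp => ?_)
  have hF : ‖(Jpend qp, Hpend qp)‖ ≤ r := mem_closedBall_zero_iff.1 (hr hqp)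
  exact (le_abs_self _).trans ((norm_snd_le _).trans hF)
end
end

section
/- Let Ω = [−1,1]×[−1,1] \ ({0}×[0,1]) and let h : [−1,1] → ℝ be continuous with h ≥ 0 and h(z) = 0 if and only if z ≥ 0. Define g : Ω → ℝ² by g(z₁,z₂) = (z₁, (z₂+2)/(z₁²+h(z₂))). Then for all real numbers 0 < a ≤ b, the preimage g⁻¹([−1,1]×[a,b]) is a compact subset of ℝ²; indeed it is contained in the compact set Ω_b = {(z₁,z₂) ∈ Ω : z₁² ≥ 1/(2b) or h(z₂) ≥ 1/(2b)}. -/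
/-!
On `Ω` the numerator `z₂ + 2` is at least `1`, so `a ≤ (z₂ + 2)/(z₁² + h z₂) ≤ b` forces
`z₁² + h z₂ ≥ 1/b`, hence `z₁² ≥ 1/(2b)` or `h z₂ ≥ 1/(2b)`. Points with either property stay
away from the slit `{0} × [0,1]` (there `z₁ = 0` and `h z₂ = 0`), so `Ω_b` is a closed subset of
the square, hence compact. On `Ω_b` the denominator of `g` is at least `1/(2b)`, so `g` is
continuous there and the preimage is closed in `Ω_b`.
-/

open Set

noncomputable section

/-- `Ω = [−1,1]×[−1,1] \ ({0}×[0,1])`. -/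
def Omeg : Set (ℝ × ℝ) :=
  (Icc (-1 : ℝ) 1 ×ˢ Icc (-1 : ℝ) 1) \ ({0} ×ˢ Icc (0 : ℝ) 1)

theorem le_or_le_of_le_div_le {s t u a b : ℝ} (ha : 0 < a) (hs : 0 ≤ s) (ht : 0 ≤ t)
    (hu : 1 ≤ u) (hlo : a ≤ u / (s + t)) (hhi : u / (s + t) ≤ b) :
    1 / (2 * b) ≤ s ∨ 1 / (2 * b) ≤ t := by
  have hst : 0 < s + t := by
    rcases (add_nonneg hs ht).lt_or_eq with hpos | hzero
    · exact hpos
    · rw [← hzero, div_zero] at hlo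
      exact absurd hlo ha.not_ge
  have hb : 0 < b := ha.trans_le (hlo.trans hhi)
  have hinv : 1 / b ≤ s + t := by
    rw [div_le_iff₀ hb]
    nlinarith [(div_le_iff₀ hst).mp hhi]
  by_contra! hlt
  have : 1 / b = 2 * (1 / (2 * b)) := by field_simp
  linarith [hlt.1, hlt.2]

theorem IsCompact.inter_preimage_of_continuousOn {X Y : Type*} [TopologicalSpace X] [T2Space X]
    [TopologicalSpace Y] {K : Set X} {f : X → Y} {C : Set Y} (hK : IsCompact K)
    (hf : ContinuousOn f K) (hC : IsClosed C) : IsCompact (K ∩ f ⁻¹' C) :=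
  hK.of_isClosed_subset (hf.preimage_isClosed_of_isClosed hK.isClosed hC) inter_subset_left

def truncOmeg (h : ℝ → ℝ) (c : ℝ) : Set (ℝ × ℝ) :=
  {p ∈ Omeg | c ≤ p.1 ^ 2 ∨ c ≤ h p.2}

section

variable {h : ℝ → ℝ} {c : ℝ}

theorem truncOmeg_eq (hc : 0 < c) (hzero : ∀ z ∈ Icc (0 : ℝ) 1, h z = 0) :
    truncOmeg h c = {p ∈ Icc (-1 : ℝ) 1 ×ˢ Icc (-1 : ℝ) 1 | c ≤ p.1 ^ 2 ∨ c ≤ h p.2} := by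
  ext p
  refine ⟨fun ⟨⟨hsq, _⟩, hp⟩ => ⟨hsq, hp⟩, fun ⟨hsq, hp⟩ => ⟨⟨hsq, ?_⟩, hp⟩⟩
  rintro ⟨hp1, hp2⟩
  rw [mem_singleton_iff.mp hp1, hzero _ hp2] at hp
  norm_num at hp
  linarith

theorem isCompact_truncOmeg (hcont : ContinuousOn h (Icc (-1 : ℝ) 1)) (hc : 0 < c)
    (hzero : ∀ z ∈ Icc (0 : ℝ) 1, h z = 0) : IsCompact (truncOmeg h c) := by
  rw [truncOmeg_eq hc hzero]
  have hF : ContinuousOn (fun p : ℝ × ℝ => (p.1 ^ 2, h p.2)) (Icc (-1 : ℝ) 1 ×ˢ Icc (-1 : ℝ) 1) :=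
    (continuous_fst.pow 2).continuousOn.prodMk
      (hcont.comp continuous_snd.continuousOn fun _ hp => hp.2)
  have hC : IsClosed {q : ℝ × ℝ | c ≤ q.1 ∨ c ≤ q.2} :=
    (isClosed_le continuous_const continuous_fst).union
      (isClosed_le continuous_const continuous_snd)
  exact (isCompact_Icc.prod isCompact_Icc).inter_preimage_of_continuousOn hF hC

theorem continuousOn_truncOmeg (hcont : ContinuousOn h (Icc (-1 : ℝ) 1))
    (hnn : ∀ z ∈ Icc (-1 : ℝ) 1, 0 ≤ h z) (hc : 0 < c) :
    ContinuousOn (fun p : ℝ × ℝ => (p.1, (p.2 + 2) / (p.1 ^ 2 + h p.2))) (truncOmeg h c) := by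
  have hmaps : MapsTo Prod.snd (truncOmeg h c) (Icc (-1 : ℝ) 1) := fun p hp => hp.1.1.2
  refine continuousOn_fst.prodMk <| (continuous_snd.add continuous_const).continuousOn.div
    ((continuous_fst.pow 2).continuousOn.add (hcont.comp continuous_snd.continuousOn hmaps)) ?_
  intro p hp
  have hpos : 0 < p.1 ^ 2 + h p.2 := by
    have := hnn _ (hmaps hp)
    have := sq_nonneg p.1
    rcases hp.2 with hp | hp <;> linarith
  exact hpos.ne'

end

/-- Let `h : [−1,1] → ℝ` be continuous with `h ≥ 0` and `h(z) = 0 ↔ z ≥ 0`, and let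
`g(z₁,z₂) = (z₁,(z₂+2)/(z₁²+h(z₂)))` on `Ω`. Then for all `0 < a ≤ b`, the preimage
`g⁻¹([−1,1]×[a,b])` (within `Ω`) is contained in the compact set
`Ω_b = {(z₁,z₂) ∈ Ω : z₁² ≥ 1/(2b) or h(z₂) ≥ 1/(2b)}`, and is itself compact. -/
theorem g_preimage_compact (h : ℝ → ℝ)
    (hcont : ContinuousOn h (Icc (-1 : ℝ) 1))
    (hnn : ∀ z ∈ Icc (-1 : ℝ) 1, 0 ≤ h z)
    (hzero : ∀ z ∈ Icc (-1 : ℝ) 1, (h z = 0 ↔ 0 ≤ z))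
    (a b : ℝ) (ha : 0 < a) (hab : a ≤ b) :
    let g : ℝ × ℝ → ℝ × ℝ := fun p => (p.1, (p.2 + 2) / (p.1 ^ 2 + h p.2))
    let Omegb : Set (ℝ × ℝ) := {p ∈ Omeg | 1 / (2 * b) ≤ p.1 ^ 2 ∨ 1 / (2 * b) ≤ h p.2}
    (Omeg ∩ g ⁻¹' (Icc (-1 : ℝ) 1 ×ˢ Icc a b) ⊆ Omegb) ∧
    IsCompact Omegb ∧
    IsCompact (Omeg ∩ g ⁻¹' (Icc (-1 : ℝ) 1 ×ˢ Icc a b)) := by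
  intro g Omegb
  set R := Icc (-1 : ℝ) 1 ×ˢ Icc a b
  have hc : 0 < 1 / (2 * b) := by have := ha.trans_le hab; positivity
  have hsub : Omeg ∩ g ⁻¹' R ⊆ Omegb := by
    rintro p ⟨hp, -, hlo, hhi⟩
    have hp2 := hp.1.2
    exact ⟨hp, le_or_le_of_le_div_le ha (sq_nonneg _) (hnn _ hp2) (by linarith [hp2.1]) hlo hhi⟩
  have hcpt : IsCompact Omegb := isCompact_truncOmeg hcont hc
    fun z hz => (hzero z ⟨by linarith [hz.1], hz.2⟩).mpr hz.1
  have hpre : Omeg ∩ g ⁻¹' R = Omegb ∩ g ⁻¹' R :=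
    Subset.antisymm (fun p hp => ⟨hsub hp, hp.2⟩) (fun p hp => ⟨hp.1.1, hp.2⟩)
  refine ⟨hsub, hcpt, ?_⟩
  rw [hpre]
  exact hcpt.inter_preimage_of_continuousOn (continuousOn_truncOmeg hcont hnn hc)
    (isClosed_Icc.prod isClosed_Icc)
end
end

section
/- Let Ω = [−1,1]×[−1,1] \ ({0}×[0,1]) and let h : [−1,1] → ℝ be continuous, nonincreasing on [−1,1], with h ≥ 0 and h(z) = 0 if and only if z ≥ 0. Define g : Ω → ℝ² by g(z₁,z₂) = (z₁, (z₂+2)/(z₁²+h(z₂))). Then g(Ω) = {(x,y) ∈ ℝ² : 0 < |x| ≤ 1 and 1/(x²+h(−1)) ≤ y ≤ 3/x²} ∪ ({0} × [1/h(−1), ∞)). In particular, for each fixed x with 0 < |x| ≤ 1 the vertical slice of g(Ω) is the interval [1/(x²+h(−1)), 3/x²], and the slice over x = 0 is the unbounded ray [1/h(−1), ∞). -/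
/-!
For fixed `z₁` the second coordinate `z₂ ↦ (z₂ + 2) / (z₁² + h z₂)` is continuous and
nondecreasing (increasing nonnegative numerator, decreasing positive denominator), so it maps
the slice of `Ω` over `z₁` onto an interval. For `z₁ ≠ 0` the slice is `[-1, 1]` and the image
is `[1/(z₁² + h(-1)), 3/z₁²]`. For `z₁ = 0` the slice is `[-1, 0)`; since `h z₂ → 0⁺` as
`z₂ → 0⁻`, the image is the ray `[1/h(-1), ∞)`.
-/

open Set Filter Topology

lemma mk_mem_image_fiberwise_iff {α β γ : Type*} {F : α → β → γ} {S : Set (α × β)}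
    {x : α} {y : γ} :
    (x, y) ∈ (fun p : α × β => (p.1, F p.1 p.2)) '' S ↔ y ∈ F x '' {z | (x, z) ∈ S} := by
  constructor
  · rintro ⟨⟨a, b⟩, hab, he⟩
    obtain ⟨rfl, rfl⟩ := Prod.mk.inj he
    exact ⟨b, hab, rfl⟩
  · rintro ⟨z, hz, rfl⟩
    exact ⟨(x, z), hz, rfl⟩

lemma MonotoneOn.div_of_antitoneOn {α 𝕜 : Type*} [Preorder α] [Semifield 𝕜] [LinearOrder 𝕜]
    [IsStrictOrderedRing 𝕜] {f g : α → 𝕜} {s : Set α} (hf : MonotoneOn f s)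
    (hg : AntitoneOn g s) (hf₀ : ∀ z ∈ s, 0 ≤ f z) (hg₀ : ∀ z ∈ s, 0 < g z) :
    MonotoneOn (fun z => f z / g z) s :=
  fun _ ha _ hb hab => div_le_div₀ (hf₀ _ hb) (hf ha hb hab) (hg₀ _ hb) (hg ha hb hab)

lemma ContinuousOn.image_Ico_of_monotoneOn_of_tendsto_atTop {α δ : Type*}
    [ConditionallyCompleteLinearOrder α] [TopologicalSpace α] [OrderTopology α]
    [DenselyOrdered α] [LinearOrder δ] [TopologicalSpace δ] [OrderClosedTopology δ]
    {f : α → δ} {a b : α} (hab : a < b) (hf : ContinuousOn f (Ico a b))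
    (hmono : MonotoneOn f (Ico a b)) (htop : Tendsto f (𝓝[<] b) atTop) :
    f '' Ico a b = Ici (f a) := by
  have ha : a ∈ Ico a b := left_mem_Ico.2 hab
  refine subset_antisymm ?_ ?_
  · rintro _ ⟨z, hz, rfl⟩
    exact hmono ha hz hz.1
  · have : (𝓝[<] b).NeBot := nhdsLT_neBot_of_exists_lt ⟨a, hab⟩
    exact isPreconnected_Ico.intermediate_value_Ici ha
      (le_principal_iff.2 (Ico_mem_nhdsLT hab)) hf htop

lemma setOf_mem_Omeg_of_ne_zero {x : ℝ} (hx : x ≠ 0) (hx₁ : |x| ≤ 1) :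
    {z | (x, z) ∈ Omeg} = Icc (-1 : ℝ) 1 := by
  ext z
  simp [Omeg, hx, abs_le.1 hx₁]

lemma setOf_mem_Omeg_zero : {z | ((0 : ℝ), z) ∈ Omeg} = Ico (-1 : ℝ) 0 := by
  ext z
  simp only [Omeg, mem_ofPred_eq, Set.mem_sdiff, mem_prod, mem_Icc, mem_singleton_iff, mem_Ico]
  grind

lemma setOf_mem_Omeg_of_one_lt_abs {x : ℝ} (hx : 1 < |x|) : {z : ℝ | (x, z) ∈ Omeg} = ∅ := by
  ext z
  simp [Omeg]
  grind [abs_le]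

section

variable {h : ℝ → ℝ}

lemma pos_of_mem_Ico_of_eq_zero_iff (hnn : ∀ z ∈ Icc (-1 : ℝ) 1, 0 ≤ h z)
    (hzero : ∀ z ∈ Icc (-1 : ℝ) 1, (h z = 0 ↔ 0 ≤ z)) {z : ℝ} (hz : z ∈ Ico (-1 : ℝ) 0) :
    0 < h z := by
  have hz' : z ∈ Icc (-1 : ℝ) 1 := ⟨hz.1, by linarith [hz.2]⟩
  exact (hnn z hz').lt_of_ne fun h0 => hz.2.not_ge ((hzero z hz').1 h0.symm)

lemma monotoneOn_slice (hanti : AntitoneOn h (Icc (-1 : ℝ) 1)) {x : ℝ} {s : Set ℝ}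
    (hs : s ⊆ Icc (-1) 1) (hpos : ∀ z ∈ s, 0 < x ^ 2 + h z) :
    MonotoneOn (fun z => (z + 2) / (x ^ 2 + h z)) s :=
  MonotoneOn.div_of_antitoneOn (fun _ _ _ _ hab => by linarith)
    (fun _ ha _ hb hab => by linarith [hanti (hs ha) (hs hb) hab])
    (fun z hz => by linarith [(hs hz).1]) hpos

lemma continuousOn_slice (hcont : ContinuousOn h (Icc (-1 : ℝ) 1)) {x : ℝ} {s : Set ℝ}
    (hs : s ⊆ Icc (-1) 1) (hpos : ∀ z ∈ s, 0 < x ^ 2 + h z) :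
    ContinuousOn (fun z => (z + 2) / (x ^ 2 + h z)) s :=
  (continuousOn_id.add continuousOn_const).div (continuousOn_const.add (hcont.mono hs))
    fun z hz => (hpos z hz).ne'

lemma image_slice_of_ne_zero (hcont : ContinuousOn h (Icc (-1 : ℝ) 1))
    (hanti : AntitoneOn h (Icc (-1 : ℝ) 1)) (hnn : ∀ z ∈ Icc (-1 : ℝ) 1, 0 ≤ h z)
    (hzero : ∀ z ∈ Icc (-1 : ℝ) 1, (h z = 0 ↔ 0 ≤ z)) {x : ℝ} (hx : x ≠ 0) :
    (fun z => (z + 2) / (x ^ 2 + h z)) '' Icc (-1) 1 =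
      Icc (1 / (x ^ 2 + h (-1))) (3 / x ^ 2) := by
  have hpos : ∀ z ∈ Icc (-1 : ℝ) 1, 0 < x ^ 2 + h z := fun z hz => by
    have := hnn z hz
    positivity
  have h₁ : h 1 = 0 := (hzero 1 (right_mem_Icc.2 (by norm_num))).2 zero_le_one
  rw [(continuousOn_slice hcont subset_rfl hpos).image_Icc_of_monotoneOn (by norm_num)
    (monotoneOn_slice hanti subset_rfl hpos)]
  norm_num [h₁]

lemma tendsto_nhdsGT_zero_of_eq_zero_iff (hcont : ContinuousOn h (Icc (-1 : ℝ) 1))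
    (hnn : ∀ z ∈ Icc (-1 : ℝ) 1, 0 ≤ h z) (hzero : ∀ z ∈ Icc (-1 : ℝ) 1, (h z = 0 ↔ 0 ≤ z)) :
    Tendsto h (𝓝[<] 0) (𝓝[>] 0) := by
  have h₀ : h 0 = 0 := (hzero 0 (by norm_num)).2 le_rfl
  have hIco : Ico (-1 : ℝ) 0 ⊆ Icc (-1) 1 := 
    Ico_subset_Icc_self.trans (Icc_subset_Icc_right zero_le_one)
  refine tendsto_nhdsWithin_iff.2 ⟨?_, ?_⟩
  · have := ((hcont 0 (by norm_num)).mono hIco).tendsto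
    rwa [h₀, nhdsWithin_Ico_eq_nhdsLT (by norm_num)] at this
  · filter_upwards [Ico_mem_nhdsLT (by norm_num : (-1 : ℝ) < 0)] with z hz
    exact pos_of_mem_Ico_of_eq_zero_iff hnn hzero hz

lemma image_slice_zero (hcont : ContinuousOn h (Icc (-1 : ℝ) 1))
    (hanti : AntitoneOn h (Icc (-1 : ℝ) 1)) (hnn : ∀ z ∈ Icc (-1 : ℝ) 1, 0 ≤ h z)
    (hzero : ∀ z ∈ Icc (-1 : ℝ) 1, (h z = 0 ↔ 0 ≤ z)) :
    (fun z => (z + 2) / ((0 : ℝ) ^ 2 + h z)) '' Ico (-1) 0 = Ici (1 / h (-1)) := by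
  have hIco : Ico (-1 : ℝ) 0 ⊆ Icc (-1) 1 := 
    Ico_subset_Icc_self.trans (Icc_subset_Icc_right zero_le_one)
  have hpos : ∀ z ∈ Ico (-1 : ℝ) 0, 0 < (0 : ℝ) ^ 2 + h z := fun z hz => by
    simpa using pos_of_mem_Ico_of_eq_zero_iff hnn hzero hz
  have htop : Tendsto (fun z => (z + 2) / ((0 : ℝ) ^ 2 + h z)) (𝓝[<] 0) atTop := by
    have hnum : Tendsto (fun z : ℝ => z + 2) (𝓝[<] 0) (𝓝 2) :=
      ((continuous_add_const 2).tendsto' 0 2 (zero_add 2)).mono_left nhdsWithin_le_nhds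
    simpa [div_eq_mul_inv] using hnum.pos_mul_atTop two_pos
      (tendsto_nhdsGT_zero_of_eq_zero_iff hcont hnn hzero).inv_tendsto_nhdsGT_zero
  rw [(continuousOn_slice hcont hIco hpos).image_Ico_of_monotoneOn_of_tendsto_atTop
    (by norm_num) (monotoneOn_slice hanti hIco hpos) htop]
  norm_num

end

/-- Let `h : [−1,1] → ℝ` be continuous, nonincreasing, with `h ≥ 0` and
`h(z) = 0 ↔ z ≥ 0`, and let `g(z₁,z₂) = (z₁,(z₂+2)/(z₁²+h(z₂)))`. Then
`g(Ω) = {(x,y) : 0 < |x| ≤ 1, 1/(x²+h(−1)) ≤ y ≤ 3/x²} ∪ ({0} × [1/h(−1),∞))`.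
In particular, for `0 < |x| ≤ 1` the vertical slice of `g(Ω)` is the interval
`[1/(x²+h(−1)), 3/x²]`, and the slice over `x = 0` is the ray `[1/h(−1),∞)`. -/
theorem image_of_g (h : ℝ → ℝ)
    (hcont : ContinuousOn h (Icc (-1 : ℝ) 1))
    (hanti : AntitoneOn h (Icc (-1 : ℝ) 1))
    (hnn : ∀ z ∈ Icc (-1 : ℝ) 1, 0 ≤ h z)
    (hzero : ∀ z ∈ Icc (-1 : ℝ) 1, (h z = 0 ↔ 0 ≤ z)) :
    let g : ℝ × ℝ → ℝ × ℝ := fun p => (p.1, (p.2 + 2) / (p.1 ^ 2 + h p.2))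
    g '' Omeg =
      {p : ℝ × ℝ | 0 < |p.1| ∧ |p.1| ≤ 1 ∧
          1 / (p.1 ^ 2 + h (-1)) ≤ p.2 ∧ p.2 ≤ 3 / p.1 ^ 2} ∪
        ({0} ×ˢ Ici (1 / h (-1))) ∧
    (∀ x : ℝ, 0 < |x| → |x| ≤ 1 →
      {y : ℝ | (x, y) ∈ g '' Omeg} = Icc (1 / (x ^ 2 + h (-1))) (3 / x ^ 2)) ∧
    {y : ℝ | ((0 : ℝ), y) ∈ g '' Omeg} = Ici (1 / h (-1)) := by
  intro g
  have hfiber (x y : ℝ) : (x, y) ∈ g '' Omeg ↔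
      y ∈ (fun z => (z + 2) / (x ^ 2 + h z)) '' {z | (x, z) ∈ Omeg} :=
    mk_mem_image_fiberwise_iff (F := fun x z => (z + 2) / (x ^ 2 + h z))
  have hslice (x : ℝ) (hx : 0 < |x|) (hx₁ : |x| ≤ 1) :
      {y : ℝ | (x, y) ∈ g '' Omeg} = Icc (1 / (x ^ 2 + h (-1))) (3 / x ^ 2) := by
    ext y
    rw [mem_ofPred_eq, hfiber, setOf_mem_Omeg_of_ne_zero (abs_pos.1 hx) hx₁,
      image_slice_of_ne_zero hcont hanti hnn hzero (abs_pos.1 hx)]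
  have hslice_zero : {y : ℝ | ((0 : ℝ), y) ∈ g '' Omeg} = Ici (1 / h (-1)) := by
    ext y
    rw [mem_ofPred_eq, hfiber, setOf_mem_Omeg_zero, image_slice_zero hcont hanti hnn hzero]
  refine ⟨?_, hslice, hslice_zero⟩
  ext ⟨x, y⟩
  rcases eq_or_ne x 0 with rfl | hx
  · simpa using Set.ext_iff.1 hslice_zero y
  rcases le_or_gt |x| 1 with hx₁ | hx₁
  · simpa [hx, hx₁] using Set.ext_iff.1 (hslice x (abs_pos.2 hx) hx₁) y
  · simp [hfiber, setOf_mem_Omeg_of_one_lt_abs hx₁, hx, hx₁.not_ge]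
end
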